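/- (Dual two-weight Hardy inequality.) Let μ and ν be locally finite positive Borel measures on (0,∞). If A := sup_{0<r<∞} ν((0,r]) · μ([r,∞)) < ∞, then for every nonnegative measurable f, ∫₀^∞ ( ∫_{[t,∞)} f dμ )² dν(t) ≤ C·A·∫₀^∞ f² dμ for an absolute constant C. -/

import Mathlib

/-!
Muckenhoupt's argument with the weight `W s = μ [s, ∞) ^ (1/2)`. Cauchy–Schwarz gives
`(∫_{[t,∞)} f dμ)² ≤ (∫_{[t,∞)} f² W dμ) (∫_{[t,∞)} W⁻¹ dμ)`, and the last factor is at most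
`4 W t`: the sublevel sets `{W ≤ c}` have `μ`-measure at most `c²`, so a dyadic decomposition of
the range of `W` sums to a geometric series. By Tonelli the left-hand side becomes
`∫ f² W (∫_{(0,s]} W dν) dμ(s)`, and the same dyadic bound for `V t = ν (0, t] ^ (1/2)`, together
with `V t · W t ≤ A ^ (1/2)`, gives `W s · ∫_{(0,s]} W dν ≤ 4 A`. Hence `C = 16`.
-/

open MeasureTheory Set
open scoped ENNReal

lemma ENNReal.rpow_inv_two_sq (x : ℝ≥0∞) : (x ^ (2⁻¹ : ℝ)) ^ 2 = x := by
  rw [← ENNReal.rpow_two, ENNReal.rpow_inv_rpow two_ne_zero]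

lemma ENNReal.rpow_inv_two_le_iff {x c : ℝ≥0∞} : x ^ (2⁻¹ : ℝ) ≤ c ↔ x ≤ c ^ 2 := by
  rw [ENNReal.rpow_inv_le_iff two_pos, ENNReal.rpow_two]

lemma ENNReal.inv_mul_sq_two_inv_pow {D : ℝ≥0∞} (hD0 : D ≠ 0) (hD_top : D ≠ ⊤) (n : ℕ) :
    (D * 2⁻¹ ^ (n + 1))⁻¹ * (D * 2⁻¹ ^ n) ^ 2 = 2 * D * 2⁻¹ ^ n := by
  rw [ENNReal.mul_inv (Or.inl hD0) (Or.inl hD_top), ← ENNReal.inv_pow, inv_inv]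
  calc D⁻¹ * 2 ^ (n + 1) * (D * 2⁻¹ ^ n) ^ 2
      = (D⁻¹ * D) * (2 ^ n * 2⁻¹ ^ n) * (2 * D * 2⁻¹ ^ n) := by ring
    _ = 2 * D * 2⁻¹ ^ n := by
      rw [ENNReal.inv_mul_cancel hD0 hD_top, ← mul_pow,
        ENNReal.mul_inv_cancel two_ne_zero ENNReal.ofNat_ne_top, one_pow, one_mul, one_mul]

section LevelSets

variable {α : Type*} [LinearOrder α] [TopologicalSpace α] [OrderTopology α] [DenselyOrdered α]
  [TopologicalSpace.SeparableSpace α]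

theorem IsUpperSet.exists_countable_eq_biUnion_Ici {S : Set α} (hS : IsUpperSet S) :
    ∃ T ⊆ S, T.Countable ∧ S = ⋃ a ∈ T, Ici a := by
  obtain ⟨D, hD_count, hD_dense⟩ := TopologicalSpace.exists_countable_dense α
  have hmin : (S ∩ lowerBounds S).Subsingleton := fun a ha b hb =>
    le_antisymm (ha.2 hb.1) (hb.2 ha.1)
  refine ⟨D ∩ S ∪ S ∩ lowerBounds S, union_subset inter_subset_right inter_subset_left,
    (hD_count.mono inter_subset_left).union hmin.countable, ?_⟩
  refine Subset.antisymm (fun x hx => ?_) (iUnion₂_subset fun a ha x hax => hS hax ?_)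
  · by_cases hx_min : x ∈ lowerBounds S
    · exact mem_biUnion (Or.inr ⟨hx, hx_min⟩) self_mem_Ici
    obtain ⟨y, hy, hyx⟩ : ∃ y ∈ S, y < x := by simpa [mem_lowerBounds] using hx_min
    obtain ⟨d, hd, hyd, hdx⟩ := hD_dense.exists_between hyx
    exact mem_biUnion (Or.inl ⟨hd, hS hyd.le hy⟩) hdx.le
  · exact ha.elim (·.2) (·.1)

theorem IsUpperSet.measure_le_iSup_Ici [MeasurableSpace α] (m : Measure α) {S : Set α}
    (hS : IsUpperSet S) : m S ≤ ⨆ a ∈ S, m (Ici a) := by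
  obtain ⟨T, hTS, hT, hST⟩ := hS.exists_countable_eq_biUnion_Ici
  have hdir : DirectedOn (Function.onFun (· ⊆ ·) Ici) T := fun a ha b hb =>
    (le_total a b).elim (fun h => ⟨a, ha, subset_rfl, Ici_subset_Ici.2 h⟩)
      fun h => ⟨b, hb, Ici_subset_Ici.2 h, subset_rfl⟩
  rw [hST, measure_biUnion_eq_iSup hT hdir]
  exact iSup₂_mono' fun a ha => ⟨a, hST ▸ hTS ha, le_rfl⟩

theorem measure_setOf_measure_Ici_le [MeasurableSpace α] (m : Measure α) (c : ℝ≥0∞) :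
    m {x | m (Ici x) ≤ c} ≤ c := by
  have hS : IsUpperSet {x | m (Ici x) ≤ c} := fun x y hxy hx =>
    (measure_mono (Ici_subset_Ici.2 hxy)).trans hx
  exact (hS.measure_le_iSup_Ici m).trans (iSup₂_le fun _ ha => ha)

theorem measure_setOf_measure_Iic_le [MeasurableSpace α] (m : Measure α) (c : ℝ≥0∞) :
    m {x | m (Iic x) ≤ c} ≤ c :=
  measure_setOf_measure_Ici_le (α := αᵒᵈ) m c

theorem measure_setOf_rpow_measure_Ici_le [MeasurableSpace α] (m : Measure α) (c : ℝ≥0∞) :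
    m {x | m (Ici x) ^ (2⁻¹ : ℝ) ≤ c} ≤ c ^ 2 := by
  simpa only [ENNReal.rpow_inv_two_le_iff] using measure_setOf_measure_Ici_le m (c ^ 2)

theorem measure_setOf_rpow_measure_Iic_le [MeasurableSpace α] (m : Measure α) (c : ℝ≥0∞) :
    m {x | m (Iic x) ^ (2⁻¹ : ℝ) ≤ c} ≤ c ^ 2 := by
  simpa only [ENNReal.rpow_inv_two_le_iff] using measure_setOf_measure_Iic_le m (c ^ 2)

end LevelSets

section CauchySchwarz

variable {α : Type*} [MeasurableSpace α] (m : Measure α)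

theorem sq_lintegral_mul_le {a b : α → ℝ≥0∞} (ha : AEMeasurable a m) (hb : AEMeasurable b m) :
    (∫⁻ x, a x * b x ∂m) ^ 2 ≤ (∫⁻ x, a x ^ 2 ∂m) * ∫⁻ x, b x ^ 2 ∂m := by
  have h := ENNReal.lintegral_mul_le_Lp_mul_Lq m Real.HolderConjugate.two_two ha hb
  simp only [Pi.mul_apply, ENNReal.rpow_two, one_div] at h
  calc (∫⁻ x, a x * b x ∂m) ^ 2
      ≤ ((∫⁻ x, a x ^ 2 ∂m) ^ (2⁻¹ : ℝ) * (∫⁻ x, b x ^ 2 ∂m) ^ (2⁻¹ : ℝ)) ^ 2 := by gcongr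
    _ = (∫⁻ x, a x ^ 2 ∂m) * ∫⁻ x, b x ^ 2 ∂m := by
      rw [mul_pow, ENNReal.rpow_inv_two_sq, ENNReal.rpow_inv_two_sq]

theorem sq_lintegral_le_lintegral_sq_mul_mul_lintegral_inv {f w : α → ℝ≥0∞}
    (hf : AEMeasurable f m) (hw : AEMeasurable w m) (hw0 : ∀ᵐ x ∂m, w x ≠ 0)
    (hw_top : ∀ᵐ x ∂m, w x ≠ ⊤) :
    (∫⁻ x, f x ∂m) ^ 2 ≤ (∫⁻ x, f x ^ 2 * w x ∂m) * ∫⁻ x, (w x)⁻¹ ∂m := by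
  -- Cauchy–Schwarz for `f = (f √w) · (√w)⁻¹`
  set r : α → ℝ≥0∞ := fun x => w x ^ (2⁻¹ : ℝ)
  have hr : AEMeasurable r m := hw.pow_const _
  have hf_eq : ∀ᵐ x ∂m, f x = f x * r x * (r x)⁻¹ := by
    filter_upwards [hw0, hw_top] with x hx0 hx_top
    rw [mul_assoc, ENNReal.mul_inv_cancel (by simp [r, hx0]) (by simp [r, hx_top]), mul_one]
  calc (∫⁻ x, f x ∂m) ^ 2 = (∫⁻ x, f x * r x * (r x)⁻¹ ∂m) ^ 2 := by
        rw [lintegral_congr_ae hf_eq]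
    _ ≤ (∫⁻ x, (f x * r x) ^ 2 ∂m) * ∫⁻ x, (r x)⁻¹ ^ 2 ∂m :=
        sq_lintegral_mul_le m (hf.mul hr) hr.inv
    _ = (∫⁻ x, f x ^ 2 * w x ∂m) * ∫⁻ x, (w x)⁻¹ ∂m := by
      simp only [mul_pow, ← ENNReal.inv_pow, r, ENNReal.rpow_inv_two_sq]

end CauchySchwarz

section Dyadic

variable {α : Type*} [MeasurableSpace α] {m : Measure α} {g : α → ℝ≥0∞} {D : ℝ≥0∞}

theorem ae_ne_zero_of_measure_le_sq (hlevel : ∀ c, m {x | g x ≤ c} ≤ c ^ 2) :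
    ∀ᵐ x ∂m, g x ≠ 0 := by
  have hnull : m {x | g x ≤ 0} = 0 := le_antisymm ((hlevel 0).trans (by simp)) zero_le
  filter_upwards [measure_eq_zero_iff_ae_notMem.1 hnull] with x hx using fun h => hx h.le

theorem lintegral_inv_le_of_measure_le_sq (hgD : ∀ᵐ x ∂m, g x ≤ D)
    (hlevel : ∀ c, m {x | g x ≤ c} ≤ c ^ 2) : ∫⁻ x, (g x)⁻¹ ∂m ≤ 4 * D := by
  rcases eq_or_ne D ⊤ with rfl | hD_top
  · simp [ENNReal.mul_top]
  have hm_univ : m univ ≤ D ^ 2 :=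
    (measure_mono_ae (hgD.mono fun x hx _ => hx)).trans (hlevel D)
  rcases eq_or_ne D 0 with rfl | hD0
  · simp [Measure.measure_univ_eq_zero.1 (by simpa using hm_univ)]
  -- On the shell `disjointed M n`, `g > τ (n + 1)` while its measure is at most `τ n ^ 2`,
  -- so it contributes at most `2 D 2⁻ⁿ`.
  set τ : ℕ → ℝ≥0∞ := fun n => D * 2⁻¹ ^ n
  set M : ℕ → Set α := fun n => {x | τ (n + 1) < g x}
  have hτ_anti : Antitone τ := fun i j hij =>
    mul_le_mul_right (pow_le_pow_right_of_le_one' (by norm_num) hij) _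
  have hM_mono : Monotone M := fun i j hij x hx => (hτ_anti (by omega)).trans_lt hx
  have hM_ae : ∀ᵐ x ∂m, x ∈ ⋃ n, M n := by
    filter_upwards [ae_ne_zero_of_measure_le_sq hlevel] with x hx
    have hτ : Filter.Tendsto τ Filter.atTop (nhds 0) := by
      simpa only [mul_zero] using ENNReal.Tendsto.const_mul
        (ENNReal.tendsto_pow_atTop_nhds_zero_of_lt_one (by norm_num : (2⁻¹ : ℝ≥0∞) < 1))
        (Or.inr hD_top)
    exact mem_iUnion.2 (((hτ.comp (Filter.tendsto_add_atTop_nat 1)).eventually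
      (gt_mem_nhds (pos_iff_ne_zero.2 hx))).exists)
  have hshell : ∀ n, m (disjointed M n) ≤ τ n ^ 2 := by
    rintro (_ | n)
    · exact (measure_mono (subset_univ _)).trans (by simpa [τ] using hm_univ)
    · refine (measure_mono fun x hx => ?_).trans (hlevel (τ (n + 1)))
      rw [hM_mono.disjointed_add_one] at hx
      simpa [M] using hx.2
  calc ∫⁻ x, (g x)⁻¹ ∂m = ∫⁻ x in ⋃ n, disjointed M n, (g x)⁻¹ ∂m := by
        rw [iUnion_disjointed, Measure.restrict_eq_self_of_ae_mem hM_ae]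
    _ ≤ ∑' n, ∫⁻ x in disjointed M n, (g x)⁻¹ ∂m := lintegral_iUnion_le _ _
    _ ≤ ∑' n, (τ (n + 1))⁻¹ * τ n ^ 2 := by
        refine ENNReal.tsum_le_tsum fun n => ?_
        calc ∫⁻ x in disjointed M n, (g x)⁻¹ ∂m ≤ ∫⁻ _ in disjointed M n, (τ (n + 1))⁻¹ ∂m :=
              setLIntegral_mono measurable_const fun x hx =>
                ENNReal.inv_le_inv.2 (disjointed_subset M n hx).le
          _ ≤ (τ (n + 1))⁻¹ * τ n ^ 2 := by
              rw [setLIntegral_const]; exact mul_le_mul_right (hshell n) _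
    _ = ∑' n, 2 * D * 2⁻¹ ^ n := by simp only [τ, ENNReal.inv_mul_sq_two_inv_pow hD0 hD_top]
    _ = 4 * D := by
        rw [ENNReal.tsum_mul_left, ENNReal.tsum_geometric, ENNReal.one_sub_inv_two, inv_inv]
        ring

end Dyadic

theorem lintegral_mul_setLIntegral_Ici_eq (μ ν : Measure ℝ) [SFinite μ] [SFinite ν]
    {φ ψ : ℝ → ℝ≥0∞} (hφ : Measurable φ) (hψ : Measurable ψ) :
    ∫⁻ t, φ t * ∫⁻ s in Ici t, ψ s ∂μ ∂ν = ∫⁻ s, (∫⁻ t in Iic s, φ t ∂ν) * ψ s ∂μ := by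
  set k : ℝ × ℝ → ℝ≥0∞ := {p | p.1 ≤ p.2}.indicator fun p => φ p.1 * ψ p.2
  have hk : Measurable k :=
    ((hφ.comp measurable_fst).mul (hψ.comp measurable_snd)).indicator
      (measurableSet_le measurable_fst measurable_snd)
  calc ∫⁻ t, φ t * ∫⁻ s in Ici t, ψ s ∂μ ∂ν = ∫⁻ t, ∫⁻ s, k (t, s) ∂μ ∂ν := by
        refine lintegral_congr fun t => ?_
        rw [← lintegral_indicator measurableSet_Ici,
          ← lintegral_const_mul _ (hψ.indicator measurableSet_Ici)]
        congr with s
        by_cases h : t ≤ s <;> simp [k, h]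
    _ = ∫⁻ s, ∫⁻ t, k (t, s) ∂ν ∂μ := lintegral_lintegral_swap hk.aemeasurable
    _ = ∫⁻ s, (∫⁻ t in Iic s, φ t ∂ν) * ψ s ∂μ := by
        refine lintegral_congr fun s => ?_
        rw [← lintegral_indicator measurableSet_Iic,
          ← lintegral_mul_const _ (hφ.indicator measurableSet_Iic)]
        congr with t
        by_cases h : t ≤ s <;> simp [k, h]

theorem sq_setLIntegral_Ici_le (μ : Measure ℝ) {f : ℝ → ℝ≥0∞} (hf : Measurable f) {t : ℝ}
    (ht : μ (Ici t) ≠ ⊤) :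
    (∫⁻ s in Ici t, f s ∂μ) ^ 2 ≤
      4 * μ (Ici t) ^ (2⁻¹ : ℝ) * ∫⁻ s in Ici t, f s ^ 2 * μ (Ici s) ^ (2⁻¹ : ℝ) ∂μ := by
  set W : ℝ → ℝ≥0∞ := fun s => μ (Ici s) ^ (2⁻¹ : ℝ)
  have hW_anti : Antitone W := fun a b hab =>
    ENNReal.rpow_le_rpow (measure_mono (Ici_subset_Ici.2 hab)) (by norm_num)
  have hlevel : ∀ c, μ.restrict (Ici t) {s | W s ≤ c} ≤ c ^ 2 := fun c =>
    (Measure.restrict_apply_le _ _).trans (measure_setOf_rpow_measure_Ici_le μ c)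
  have hW_le : ∀ᵐ s ∂μ.restrict (Ici t), W s ≤ W t :=
    (ae_restrict_mem measurableSet_Ici).mono fun s hs => hW_anti hs
  have hW_top : ∀ᵐ s ∂μ.restrict (Ici t), W s ≠ ⊤ :=
    hW_le.mono fun s hs => ne_top_of_le_ne_top (by simp [W, ht]) hs
  calc (∫⁻ s in Ici t, f s ∂μ) ^ 2
      ≤ (∫⁻ s in Ici t, f s ^ 2 * W s ∂μ) * ∫⁻ s in Ici t, (W s)⁻¹ ∂μ :=
        sq_lintegral_le_lintegral_sq_mul_mul_lintegral_inv _ hf.aemeasurable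
          hW_anti.measurable.aemeasurable (ae_ne_zero_of_measure_le_sq hlevel) hW_top
    _ ≤ (∫⁻ s in Ici t, f s ^ 2 * W s ∂μ) * (4 * W t) := by
        gcongr
        exact lintegral_inv_le_of_measure_le_sq hW_le hlevel
    _ = 4 * W t * ∫⁻ s in Ici t, f s ^ 2 * W s ∂μ := by ring

theorem setLIntegral_Iic_mul_le (μ ν : Measure ℝ) {A : ℝ≥0∞} (hA_top : A ≠ ⊤)
    (hA : ∀ r, ν (Iic r) * μ (Ici r) ≤ A) (s : ℝ) :
    (∫⁻ t in Iic s, μ (Ici t) ^ (2⁻¹ : ℝ) ∂ν) * μ (Ici s) ^ (2⁻¹ : ℝ) ≤ 4 * A := by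
  set W : ℝ → ℝ≥0∞ := fun r => μ (Ici r) ^ (2⁻¹ : ℝ)
  set V : ℝ → ℝ≥0∞ := fun r => ν (Iic r) ^ (2⁻¹ : ℝ)
  have hVW : ∀ r, V r * W r ≤ A ^ (2⁻¹ : ℝ) := fun r => by
    rw [← ENNReal.mul_rpow_of_nonneg _ _ (by norm_num)]
    exact ENNReal.rpow_le_rpow (hA r) (by norm_num)
  have hV_mono : Monotone V := fun a b hab =>
    ENNReal.rpow_le_rpow (measure_mono (Iic_subset_Iic.2 hab)) (by norm_num)
  have hlevel : ∀ c, ν.restrict (Iic s) {t | V t ≤ c} ≤ c ^ 2 := fun c =>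
    (Measure.restrict_apply_le _ _).trans (measure_setOf_rpow_measure_Iic_le ν c)
  have hA_sqrt_top : A ^ (2⁻¹ : ℝ) ≠ ⊤ := ENNReal.rpow_ne_top_of_nonneg (by norm_num) hA_top
  have hW_le : ∀ᵐ t ∂ν.restrict (Iic s), W t ≤ A ^ (2⁻¹ : ℝ) * (V t)⁻¹ := by
    filter_upwards [ae_ne_zero_of_measure_le_sq hlevel] with t ht
    rw [← div_eq_mul_inv, ENNReal.le_div_iff_mul_le (Or.inl ht) (Or.inr hA_sqrt_top), mul_comm]
    exact hVW t
  calc (∫⁻ t in Iic s, W t ∂ν) * W s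
      ≤ (A ^ (2⁻¹ : ℝ) * ∫⁻ t in Iic s, (V t)⁻¹ ∂ν) * W s := by
        rw [← lintegral_const_mul' _ _ hA_sqrt_top]
        gcongr ?_ * _
        exact lintegral_mono_ae hW_le
    _ ≤ (A ^ (2⁻¹ : ℝ) * (4 * V s)) * W s := by
        gcongr
        exact lintegral_inv_le_of_measure_le_sq
          ((ae_restrict_mem measurableSet_Iic).mono fun t ht => hV_mono ht) hlevel
    _ = 4 * A ^ (2⁻¹ : ℝ) * (V s * W s) := by ring
    _ ≤ 4 * A ^ (2⁻¹ : ℝ) * A ^ (2⁻¹ : ℝ) := by gcongr; exact hVW s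
    _ = 4 * A := by rw [mul_assoc, ← sq, ENNReal.rpow_inv_two_sq]

theorem lintegral_sq_setLIntegral_Ici_le_of_ne_top (μ ν : Measure ℝ) [SFinite μ] [SFinite ν]
    {A : ℝ≥0∞} (hA_top : A ≠ ⊤) (hA : ∀ r, ν (Iic r) * μ (Ici r) ≤ A)
    {f : ℝ → ℝ≥0∞} (hf : Measurable f) :
    ∫⁻ t, (∫⁻ s in Ici t, f s ∂μ) ^ 2 ∂ν ≤ 16 * A * ∫⁻ s, f s ^ 2 ∂μ := by
  set W : ℝ → ℝ≥0∞ := fun r => μ (Ici r) ^ (2⁻¹ : ℝ)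
  have hW : Measurable W := (Antitone.measurable fun a b hab =>
    measure_mono (μ := μ) (Ici_subset_Ici.2 hab)).pow_const _
  have hμ_fin : ∀ᵐ t ∂ν, μ (Ici t) ≠ ⊤ := by
    filter_upwards [ae_ne_zero_of_measure_le_sq (measure_setOf_rpow_measure_Iic_le ν)] with t ht
    refine fun h_top => (hA t).not_gt ?_
    rw [h_top, ENNReal.mul_top (by simpa using ht)]
    exact lt_top_iff_ne_top.2 hA_top
  calc ∫⁻ t, (∫⁻ s in Ici t, f s ∂μ) ^ 2 ∂ν
      ≤ ∫⁻ t, 4 * (W t * ∫⁻ s in Ici t, f s ^ 2 * W s ∂μ) ∂ν :=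
        lintegral_mono_ae <| hμ_fin.mono fun t ht =>
          (sq_setLIntegral_Ici_le μ hf ht).trans_eq (mul_assoc _ _ _)
    _ = 4 * ∫⁻ s, (∫⁻ t in Iic s, W t ∂ν) * (f s ^ 2 * W s) ∂μ := by
        rw [lintegral_const_mul' _ _ (by norm_num),
          lintegral_mul_setLIntegral_Ici_eq μ ν hW (ψ := fun s => f s ^ 2 * W s) (by fun_prop)]
    _ ≤ 4 * ∫⁻ s, 4 * A * f s ^ 2 ∂μ := by
        gcongr 4 * ?_
        refine lintegral_mono fun s => ?_
        calc (∫⁻ t in Iic s, W t ∂ν) * (f s ^ 2 * W s)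
            = f s ^ 2 * ((∫⁻ t in Iic s, W t ∂ν) * W s) := by ring
          _ ≤ f s ^ 2 * (4 * A) := mul_le_mul_right (setLIntegral_Iic_mul_le μ ν hA_top hA s) _
          _ = 4 * A * f s ^ 2 := by ring
    _ = 16 * A * ∫⁻ s, f s ^ 2 ∂μ := by
        rw [lintegral_const_mul _ (hf.pow_const 2), ← mul_assoc, ← mul_assoc]
        norm_num

theorem lintegral_sq_setLIntegral_Ici_le (μ ν : Measure ℝ) [SFinite μ] [SFinite ν]
    {A : ℝ≥0∞} (hA : ∀ r, ν (Iic r) * μ (Ici r) ≤ A) {f : ℝ → ℝ≥0∞} (hf : Measurable f) :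
    ∫⁻ t, (∫⁻ s in Ici t, f s ∂μ) ^ 2 ∂ν ≤ 16 * A * ∫⁻ s, f s ^ 2 ∂μ := by
  rcases ne_or_eq A ⊤ with hA_top | rfl
  · exact lintegral_sq_setLIntegral_Ici_le_of_ne_top μ ν hA_top hA hf
  rcases ne_or_eq (∫⁻ s, f s ^ 2 ∂μ) 0 with hf2 | hf2
  · simp [ENNReal.mul_top, ENNReal.top_mul hf2]
  have hf0 : f =ᵐ[μ] 0 := ((lintegral_eq_zero_iff (hf.pow_const 2)).1 hf2).mono
    fun s hs => pow_eq_zero_iff two_ne_zero |>.1 hs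
  simp [lintegral_congr_ae (ae_restrict_of_ae hf0)]

/-- The dual two-weight Hardy inequality on `(0,∞)`. -/
theorem two_weight_dual_hardy :
    ∃ C : ℝ≥0∞, C ≠ ⊤ ∧
      ∀ (μ ν : Measure ℝ), IsLocallyFiniteMeasure μ → IsLocallyFiniteMeasure ν →
        ∀ A : ℝ≥0∞, (∀ r : ℝ, 0 < r → ν (Ioc 0 r) * μ (Ici r) ≤ A) →
          ∀ f : ℝ → ℝ≥0∞, Measurable f →
            ∫⁻ t in Ioi (0 : ℝ), (∫⁻ s in Ici t, f s ∂μ) ^ 2 ∂ν ≤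
              C * A * ∫⁻ s in Ioi (0 : ℝ), (f s) ^ 2 ∂μ := by
  refine ⟨16, by norm_num, fun μ ν _ _ A hA f hf => ?_⟩
  have hA' : ∀ r, ν.restrict (Ioi 0) (Iic r) * μ.restrict (Ioi 0) (Ici r) ≤ A := by
    intro r
    rw [Measure.restrict_apply measurableSet_Iic, Iic_inter_Ioi]
    rcases le_or_gt r 0 with hr | hr
    · simp [Ioc_eq_empty_of_le hr]
    · exact (mul_le_mul_right (Measure.restrict_apply_le _ _) _).trans (hA r hr)
  calc ∫⁻ t in Ioi 0, (∫⁻ s in Ici t, f s ∂μ) ^ 2 ∂ν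
      = ∫⁻ t in Ioi 0, (∫⁻ s in Ici t, f s ∂μ.restrict (Ioi 0)) ^ 2 ∂ν :=
        setLIntegral_congr_fun measurableSet_Ioi fun t ht => by
          rw [Measure.restrict_restrict measurableSet_Ici, inter_eq_left.2 (Ici_subset_Ioi.2 ht)]
    _ ≤ 16 * A * ∫⁻ s in Ioi 0, f s ^ 2 ∂μ := lintegral_sq_setLIntegral_Ici_le _ _ hA' hf
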